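/- Let μ : ℝ → ℝ be three times differentiable and satisfy the thirty-fourth Painlevé equation μ'''(x) = −6μ(x)μ'(x) + 2xμ'(x) + 4μ(x) for all x ∈ ℝ. Set μ̃(x) = μ(x) − x. Then the function x ↦ μ̃(x)μ̃''(x) − (1/2)μ̃'(x)² + 2μ̃(x)³ + 2x·μ̃(x)² is constant on ℝ. In particular, if in addition μ(x) ≠ x for all x ∈ ℝ, then there is a constant c ∈ ℝ such that μ̃''(x) = μ̃'(x)²/(2μ̃(x)) − 2μ̃(x)² − 2x·μ̃(x) + c/μ̃(x) for all x ∈ ℝ (the Painlevé-type equation P4′). -/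

import Mathlib

/-!
Shifting by `x` turns P34 for `μ` into `μ̃''' = -6μ̃μ̃' - 4xμ̃' - 2μ̃`. For
`F = μ̃μ̃'' - μ̃'²/2 + 2μ̃³ + 2xμ̃²` one computes `F' = μ̃ (μ̃''' + 6μ̃μ̃' + 4xμ̃' + 2μ̃)`,
so `F` is constant, and solving `F = c` for `μ̃''` where `μ̃ ≠ 0` gives P4′.
-/

noncomputable def p4FirstIntegral (u : ℝ → ℝ) (x : ℝ) : ℝ :=
  u x * deriv (deriv u) x - (1 / 2) * deriv u x ^ 2 + 2 * u x ^ 3 + 2 * x * u x ^ 2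

theorem hasDerivAt_p4FirstIntegral {u : ℝ → ℝ} (hu : ContDiff ℝ 3 u) (x : ℝ) :
    HasDerivAt (p4FirstIntegral u)
      (u x * (deriv (deriv (deriv u)) x + 6 * u x * deriv u x + 4 * x * deriv u x + 2 * u x))
      x := by
  have hu₀ : Differentiable ℝ u := hu.differentiable three_ne_zero
  have hu₁ : Differentiable ℝ (deriv u) := (hu.deriv' (n := 2)).differentiable two_ne_zero
  have hu₂ : Differentiable ℝ (deriv (deriv u)) :=
    ((hu.deriv' (n := 2)).deriv' (n := 1)).differentiable one_ne_zero
  have h := ((((hu₀ x).hasDerivAt.mul (hu₂ x).hasDerivAt).sub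
    (((hu₁ x).hasDerivAt.pow 2).const_mul (1 / 2))).add
    (((hu₀ x).hasDerivAt.pow 3).const_mul 2)).add
    (((hasDerivAt_id x).const_mul 2).mul ((hu₀ x).hasDerivAt.pow 2))
  refine (show HasDerivAt (p4FirstIntegral u) _ x from h).congr_deriv ?_
  simp only [Pi.pow_apply, id]
  ring

theorem p4FirstIntegral_eq_const {u : ℝ → ℝ} (hu : ContDiff ℝ 3 u)
    (hode : ∀ x, deriv (deriv (deriv u)) x
      = -6 * u x * deriv u x - 4 * x * deriv u x - 2 * u x) (x : ℝ) :
    p4FirstIntegral u x = p4FirstIntegral u 0 := by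
  have h' : ∀ y, HasDerivAt (p4FirstIntegral u) 0 y := fun y =>
    (hasDerivAt_p4FirstIntegral hu y).congr_deriv (by rw [hode y]; ring)
  exact is_const_of_deriv_eq_zero (fun y => (h' y).differentiableAt) (fun y => (h' y).deriv) x 0

theorem deriv_deriv_eq_of_p4FirstIntegral_eq {u : ℝ → ℝ} {x c : ℝ}
    (h : p4FirstIntegral u x = c) (hx : u x ≠ 0) :
    deriv (deriv u) x
      = deriv u x ^ 2 / (2 * u x) - 2 * u x ^ 2 - 2 * x * u x + c / u x := by
  rw [← h, p4FirstIntegral]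
  field_simp
  ring

theorem deriv_sub_id {m : ℝ → ℝ} (hm : Differentiable ℝ m) :
    deriv (fun x => m x - x) = fun x => deriv m x - 1 := by
  funext x
  exact ((hm x).hasDerivAt.sub (hasDerivAt_id x)).deriv

theorem p34_sub_id {m : ℝ → ℝ} (hm : Differentiable ℝ m)
    (hP34 : ∀ x, deriv (deriv (deriv m)) x = -6 * m x * deriv m x + 2 * x * deriv m x + 4 * m x)
    (x : ℝ) :
    deriv (deriv (deriv (fun y => m y - y))) x
      = -6 * (m x - x) * deriv (fun y => m y - y) x - 4 * x * deriv (fun y => m y - y) x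
        - 2 * (m x - x) := by
  rw [deriv_sub_id hm, deriv_sub_const_fun, hP34]
  ring

theorem stmt_7 (m : ℝ → ℝ) (hm : ContDiff ℝ 3 m)
    (hP34 : ∀ x : ℝ, deriv (deriv (deriv m)) x
      = -6 * m x * deriv m x + 2 * x * deriv m x + 4 * m x)
    (mt : ℝ → ℝ) (hmt : ∀ x : ℝ, mt x = m x - x) :
    (∃ C : ℝ, ∀ x : ℝ,
      mt x * deriv (deriv mt) x - (1 / 2) * (deriv mt x) ^ 2 + 2 * mt x ^ 3
        + 2 * x * mt x ^ 2 = C)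
    ∧ ((∀ x : ℝ, m x ≠ x) →
      ∃ c : ℝ, ∀ x : ℝ, deriv (deriv mt) x
        = (deriv mt x) ^ 2 / (2 * mt x) - 2 * mt x ^ 2 - 2 * x * mt x + c / mt x) := by
  obtain rfl : mt = fun x => m x - x := funext hmt
  have hconst := p4FirstIntegral_eq_const (u := fun x => m x - x) (hm.sub contDiff_id)
    (p34_sub_id (hm.differentiable three_ne_zero) hP34)
  exact ⟨⟨_, hconst⟩, fun hne => ⟨_, fun x =>
    deriv_deriv_eq_of_p4FirstIntegral_eq (hconst x) (sub_ne_zero.mpr (hne x))⟩⟩
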